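/- The unitary U_n satisfies (⟨0|⊗⟨0|⊗⟨0|⊗I_N) U_n (|0⟩⊗|0⟩⊗|0⟩⊗e_{N−1}) = (1/4)(e_{N−2} − e_{N−1}). -/

import Mathlib

open Matrix
open scoped Kronecker

noncomputable section

instance instNeZeroPow2 (n : ℕ) : NeZero (2 ^ n) := ⟨pow_ne_zero n two_ne_zero⟩

/-- Cyclic left shift: `Sm • e_j = e_{j-1 mod N}`, i.e. `(Sm)_{i j} = [i = j - 1]`. -/
def Sm (N : ℕ) [NeZero N] : Matrix (Fin N) (Fin N) ℂ :=
  Matrix.of fun i j => if i = j - 1 then 1 else 0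

/-- Cyclic right shift: `Sp • e_j = e_{j+1 mod N}`. -/
def Sp (N : ℕ) [NeZero N] : Matrix (Fin N) (Fin N) ℂ :=
  Matrix.of fun i j => if i = j + 1 then 1 else 0

/-- The index `N - 1` of the last grid point. -/
def fLast (N : ℕ) [NeZero N] : Fin N := ⟨N - 1, Nat.sub_lt (Nat.pos_of_neZero N) Nat.one_pos⟩

def Hgate : Matrix (Fin 2) (Fin 2) ℂ := ((1 / Real.sqrt 2 : ℝ) : ℂ) • !![1, 1; 1, -1]
def Zgate : Matrix (Fin 2) (Fin 2) ℂ := !![1, 0; 0, -1]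
def Xgate : Matrix (Fin 2) (Fin 2) ℂ := !![0, 1; 1, 0]
def P0 : Matrix (Fin 2) (Fin 2) ℂ := !![1, 0; 0, 0]
def P1 : Matrix (Fin 2) (Fin 2) ℂ := !![0, 0; 0, 1]

/-- Controlled flip `F(Q) = X ⊗ Q + I₂ ⊗ (I − Q)` for a projector `Q`. -/
def Fctrl {α : Type*} [DecidableEq α] [Fintype α] (Q : Matrix α α ℂ) :
    Matrix (Fin 2 × α) (Fin 2 × α) ℂ :=
  Xgate ⊗ₖ Q + (1 : Matrix (Fin 2) (Fin 2) ℂ) ⊗ₖ ((1 : Matrix α α ℂ) - Q)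

/-- `C₋ = I₂ ⊗ (|0⟩⟨0| ⊗ I₂ ⊗ S⁻ + |1⟩⟨1| ⊗ I₂ ⊗ I_N)` on `del, ℓ₁, ℓ₀, j`. -/
def Cminus3 (N : ℕ) [NeZero N] :
    Matrix (Fin 2 × Fin 2 × Fin 2 × Fin N) (Fin 2 × Fin 2 × Fin 2 × Fin N) ℂ :=
  (1 : Matrix (Fin 2) (Fin 2) ℂ) ⊗ₖ
    (P0 ⊗ₖ ((1 : Matrix (Fin 2) (Fin 2) ℂ) ⊗ₖ Sm N) +
     P1 ⊗ₖ ((1 : Matrix (Fin 2) (Fin 2) ℂ) ⊗ₖ (1 : Matrix (Fin N) (Fin N) ℂ)))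

/-- `C₊ = I₂ ⊗ I₂ ⊗ (|1⟩⟨1| ⊗ S⁺ + |0⟩⟨0| ⊗ I_N)` on `del, ℓ₁, ℓ₀, j`. -/
def Cplus3 (N : ℕ) [NeZero N] :
    Matrix (Fin 2 × Fin 2 × Fin 2 × Fin N) (Fin 2 × Fin 2 × Fin 2 × Fin N) ℂ :=
  (1 : Matrix (Fin 2) (Fin 2) ℂ) ⊗ₖ ((1 : Matrix (Fin 2) (Fin 2) ℂ) ⊗ₖ
    (P1 ⊗ₖ Sp N + P0 ⊗ₖ (1 : Matrix (Fin N) (Fin N) ℂ)))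

/-- `B₀ = F(|0⟩⟨0| ⊗ |0⟩⟨0| ⊗ e₀e₀ᵀ)`. -/
def B00 (N : ℕ) [NeZero N] :
    Matrix (Fin 2 × Fin 2 × Fin 2 × Fin N) (Fin 2 × Fin 2 × Fin 2 × Fin N) ℂ :=
  Fctrl (P0 ⊗ₖ (P0 ⊗ₖ Matrix.single (0 : Fin N) (0 : Fin N) (1 : ℂ)))

/-- `B₂ = F(|0⟩⟨0| ⊗ |1⟩⟨1| ⊗ e₀e₀ᵀ)`. -/
def B01 (N : ℕ) [NeZero N] :
    Matrix (Fin 2 × Fin 2 × Fin 2 × Fin N) (Fin 2 × Fin 2 × Fin 2 × Fin N) ℂ :=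
  Fctrl (P0 ⊗ₖ (P1 ⊗ₖ Matrix.single (0 : Fin N) (0 : Fin N) (1 : ℂ)))

/-- `B_{N−1} = F(|1⟩⟨1| ⊗ |1⟩⟨1| ⊗ e_{N−1}e_{N−1}ᵀ)`. -/
def B11L (N : ℕ) [NeZero N] :
    Matrix (Fin 2 × Fin 2 × Fin 2 × Fin N) (Fin 2 × Fin 2 × Fin 2 × Fin N) ℂ :=
  Fctrl (P1 ⊗ₖ (P1 ⊗ₖ Matrix.single (fLast N) (fLast N) (1 : ℂ)))

/-- `B₄ = F(|0⟩⟨0| ⊗ |1⟩⟨1| ⊗ e_{N−1}e_{N−1}ᵀ)`. -/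
def B01L (N : ℕ) [NeZero N] :
    Matrix (Fin 2 × Fin 2 × Fin 2 × Fin N) (Fin 2 × Fin 2 × Fin 2 × Fin N) ℂ :=
  Fctrl (P0 ⊗ₖ (P1 ⊗ₖ Matrix.single (fLast N) (fLast N) (1 : ℂ)))

/-- `I₂ ⊗ A ⊗ A ⊗ I_N` for a single-qubit gate `A`. -/
def sandwich (N : ℕ) [NeZero N] (A : Matrix (Fin 2) (Fin 2) ℂ) :
    Matrix (Fin 2 × Fin 2 × Fin 2 × Fin N) (Fin 2 × Fin 2 × Fin 2 × Fin N) ℂ :=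
  (1 : Matrix (Fin 2) (Fin 2) ℂ) ⊗ₖ (A ⊗ₖ (A ⊗ₖ (1 : Matrix (Fin N) (Fin N) ℂ)))

/-- `U_d = (I₂⊗H⊗H⊗I) · C₊ · C₋ · B_{N−1} · B₀ · (I₂⊗Z⊗Z⊗I) · (I₂⊗H⊗H⊗I)`. -/
def Ud (N : ℕ) [NeZero N] :
    Matrix (Fin 2 × Fin 2 × Fin 2 × Fin N) (Fin 2 × Fin 2 × Fin 2 × Fin N) ℂ :=
  sandwich N Hgate * Cplus3 N * Cminus3 N * B11L N * B00 N * sandwich N Zgate * sandwich N Hgate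

/-- `U_n = (I₂⊗H⊗H⊗I) · C₊ · C₋ · B₄ · B₃ · B₂ · B₁ · (I₂⊗Z⊗Z⊗I) · (I₂⊗H⊗H⊗I)`. -/
def Un (N : ℕ) [NeZero N] :
    Matrix (Fin 2 × Fin 2 × Fin 2 × Fin N) (Fin 2 × Fin 2 × Fin 2 × Fin N) ℂ :=
  sandwich N Hgate * Cplus3 N * Cminus3 N * B01L N * B11L N * B01 N * B00 N *
    sandwich N Zgate * sandwich N Hgate

/-- The standard basis vector `e_i` of `ℂ^N`. -/
def eVec (N : ℕ) (i : Fin N) : Fin N → ℂ := Pi.single i 1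

/-!
After the first Hadamard layer and the phase layer `Z ⊗ Z`, the input `|0,00,e_{N-1}⟩` becomes
`½ (|0,00⟩ - |0,01⟩ - |0,10⟩ + |0,11⟩) ⊗ e_{N-1}`. The flips `B₁, B₂` only see `j = 0`, while
`B₃, B₄` move the `|11⟩` and `|01⟩` components to `del = 1`, where the final projection onto
`del = 0` discards them. Of the two surviving components, `|00⟩` is shifted to `e_{N-2}` by `C₋`
and `|10⟩` is left alone by both shifts; the last Hadamard layer followed by `⟨00|` contributes
another factor `½`.
-/

def ket (N : ℕ) (del l₁ l₀ : Fin 2) (j : Fin N) : Fin 2 × Fin 2 × Fin 2 × Fin N → ℂ :=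
  Pi.single (del, l₁, l₀, j) 1

lemma P0_eq_single : P0 = Matrix.single 0 0 1 := by
  ext i j; fin_cases i <;> fin_cases j <;> rfl

lemma P1_eq_single : P1 = Matrix.single 1 1 1 := by
  ext i j; fin_cases i <;> fin_cases j <;> rfl

lemma Hgate_zero_apply (a : Fin 2) : Hgate 0 a = Hgate a 0 := by
  fin_cases a <;> rfl

lemma Hgate_apply_zero_mul (a b : Fin 2) : Hgate a 0 * Hgate b 0 = 1 / 2 := by
  have h : ((Real.sqrt 2 : ℝ) : ℂ) ^ 2 = 2 := by
    rw [← Complex.ofReal_pow, Real.sq_sqrt zero_le_two]; norm_num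
  fin_cases a <;> fin_cases b <;> simp [Hgate] <;> field_simp <;> exact h.symm

lemma Fctrl_single_mulVec_single {α : Type*} [DecidableEq α] [Fintype α] (p q : α) (d : Fin 2) :
    Fctrl (Matrix.single p p 1) *ᵥ Pi.single (d, q) 1 =
      Pi.single (if q = p then d + 1 else d, q) 1 := by
  ext ⟨e, r⟩
  by_cases hq : q = p
  · subst hq
    fin_cases d <;> fin_cases e <;>
      simp [Fctrl, Xgate, Matrix.single, Pi.single_apply, Matrix.one_apply, eq_comm]
  · simp [Fctrl, Matrix.single, Pi.single_apply, Matrix.one_apply, Ne.symm hq, hq, ← ite_and,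
      and_comm]

section

variable {N : ℕ} [NeZero N]

lemma fLast_add_one : fLast N + 1 = 0 := by
  have hN := Nat.pos_of_neZero N
  ext
  rw [Fin.val_add, Fin.val_one', fLast, Fin.val_zero]
  rcases Nat.lt_or_ge 1 N with h | h
  · rw [Nat.mod_eq_of_lt h, Nat.sub_add_cancel hN, Nat.mod_self]
  · simp [show N = 1 by omega]

lemma fLast_sub_one (hN : 2 ≤ N) : fLast N - 1 = ⟨N - 2, by omega⟩ := by
  ext
  rw [Fin.sub_def, Fin.val_one', Nat.mod_eq_of_lt (by omega : 1 < N)]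
  simp only [fLast]
  rw [show N - 1 + (N - 1) = N - 2 + N by omega, Nat.add_mod_right, Nat.mod_eq_of_lt (by omega)]

lemma fLast_ne_zero (hN : 2 ≤ N) : fLast N ≠ 0 := by
  simp only [fLast, ne_eq, Fin.ext_iff, Fin.val_zero]
  omega

lemma sandwich_mulVec_apply (A : Matrix (Fin 2) (Fin 2) ℂ) (v : Fin 2 × Fin 2 × Fin 2 × Fin N → ℂ)
    (d a b : Fin 2) (i : Fin N) :
    (sandwich N A *ᵥ v) (d, a, b, i) = ∑ a', ∑ b', A a a' * A b b' * v (d, a', b', i) := by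
  simp [sandwich, Matrix.mulVec, dotProduct, Fintype.sum_prod_type, Matrix.one_apply]

lemma sandwich_mulVec_ket (A : Matrix (Fin 2) (Fin 2) ℂ) (d a b : Fin 2) (j : Fin N) :
    sandwich N A *ᵥ ket N d a b j = ∑ a', ∑ b', (A a' a * A b' b) • ket N d a' b' j := by
  ext ⟨d', a', b', i⟩
  rw [sandwich_mulVec_apply]
  simp [ket, Finset.sum_apply, Pi.single_apply, ite_and, -Fin.sum_univ_two]

lemma Cminus3_mulVec_ket (d a b : Fin 2) (j : Fin N) :
    Cminus3 N *ᵥ ket N d a b j = ket N d a b (if a = 0 then j - 1 else j) := by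
  ext ⟨d', a', b', i⟩
  fin_cases a <;> fin_cases a' <;>
    simp [Cminus3, Sm, P0, P1, ket, Matrix.mulVec_single, Pi.single_apply, Matrix.one_apply,
      ← ite_and, and_comm, and_left_comm]

lemma Cplus3_mulVec_ket (d a b : Fin 2) (j : Fin N) :
    Cplus3 N *ᵥ ket N d a b j = ket N d a b (if b = 1 then j + 1 else j) := by
  ext ⟨d', a', b', i⟩
  fin_cases b <;> fin_cases b' <;>
    simp [Cplus3, Sp, P0, P1, ket, Matrix.mulVec_single, Pi.single_apply, Matrix.one_apply,
       ← ite_and, and_comm, and_left_comm]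

lemma phase_layer_mulVec_ket (d : Fin 2) (j : Fin N) :
    sandwich N Zgate *ᵥ (sandwich N Hgate *ᵥ ket N d 0 0 j) =
      (1 / 2 : ℂ) • (ket N d 0 0 j - ket N d 0 1 j - ket N d 1 0 j + ket N d 1 1 j) := by
  simp only [sandwich_mulVec_ket, Fin.sum_univ_two, Hgate_apply_zero_mul, Matrix.mulVec_add,
    Matrix.mulVec_smul]
  simp only [Zgate, of_apply, cons_val', cons_val_zero, cons_val_one, cons_val_fin_one]
  module

lemma boundary_flips_mulVec (hN : 2 ≤ N) :
    B01L N *ᵥ (B11L N *ᵥ (B01 N *ᵥ (B00 N *ᵥ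
        (ket N 0 0 0 (fLast N) - ket N 0 0 1 (fLast N) - ket N 0 1 0 (fLast N)
          + ket N 0 1 1 (fLast N))))) =
      ket N 0 0 0 (fLast N) - ket N 1 0 1 (fLast N) - ket N 0 1 0 (fLast N)
        + ket N 1 1 1 (fLast N) := by
  simp only [B00, B01, B11L, B01L, P0_eq_single, P1_eq_single, Matrix.single_kronecker_single,
    mul_one, Matrix.mulVec_add, Matrix.mulVec_sub, ket, Fctrl_single_mulVec_single]
  simp [fLast_ne_zero hN]

lemma shifts_mulVec :
    Cplus3 N *ᵥ (Cminus3 N *ᵥ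
        (ket N 0 0 0 (fLast N) - ket N 1 0 1 (fLast N) - ket N 0 1 0 (fLast N)
          + ket N 1 1 1 (fLast N))) =
      ket N 0 0 0 (fLast N - 1) - ket N 1 0 1 (fLast N) - ket N 0 1 0 (fLast N)
        + ket N 1 1 1 0 := by
  simp [Matrix.mulVec_add, Matrix.mulVec_sub, Cminus3_mulVec_ket, Cplus3_mulVec_ket, fLast_add_one]

lemma Un_mulVec_ket_last (hN : 2 ≤ N) :
    Un N *ᵥ ket N 0 0 0 (fLast N) = sandwich N Hgate *ᵥ ((1 / 2 : ℂ) •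
      (ket N 0 0 0 (fLast N - 1) - ket N 1 0 1 (fLast N) - ket N 0 1 0 (fLast N)
        + ket N 1 1 1 0)) := by
  simp only [Un, ← Matrix.mulVec_mulVec, phase_layer_mulVec_ket, Matrix.mulVec_smul,
    boundary_flips_mulVec hN, shifts_mulVec]

lemma Un_apply_last (hN : 2 ≤ N) (i : Fin N) :
    Un N (0, 0, 0, i) (0, 0, 0, fLast N) =
      (1 / 4 : ℂ) * ((if i = fLast N - 1 then 1 else 0) - if i = fLast N then 1 else 0) := by
  have hcol : Un N (0, 0, 0, i) (0, 0, 0, fLast N) =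
      (Un N *ᵥ ket N 0 0 0 (fLast N)) (0, 0, 0, i) := by
    rw [ket, Matrix.mulVec_single_one, Matrix.col_apply]
  rw [hcol, Un_mulVec_ket_last hN, sandwich_mulVec_apply]
  simp only [Hgate_zero_apply, Hgate_apply_zero_mul]
  simp only [ket, Fin.isValue, Pi.smul_apply, Pi.add_apply, Pi.sub_apply, Pi.single_apply,
    Prod.mk.injEq, true_and, zero_ne_one, one_ne_zero, false_and, and_false, ↓reduceIte, sub_zero,
    add_zero, smul_eq_mul, Fin.sum_univ_two]
  split_ifs <;> ring

end

/-- `(⟨0|⊗⟨0|⊗⟨0|⊗I) U_n (|0⟩⊗|0⟩⊗|0⟩⊗e_{N−1}) = (1/4)(e_{N−2} − e_{N−1})`. -/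
theorem un_right_boundary_action (n : ℕ) (hn : 1 ≤ n) :
    (fun i : Fin (2 ^ n) =>
        Un (2 ^ n) ((0 : Fin 2), (0 : Fin 2), (0 : Fin 2), i)
          ((0 : Fin 2), (0 : Fin 2), (0 : Fin 2), fLast (2 ^ n)))
      = (1 / 4 : ℂ) •
          (eVec (2 ^ n)
              ⟨2 ^ n - 2, (by have := Nat.one_lt_two_pow_iff.mpr (by omega : n ≠ 0); omega)⟩
            - eVec (2 ^ n) (fLast (2 ^ n))) := by
  have hN : 2 ≤ 2 ^ n := Nat.le_self_pow (by omega) 2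
  ext i
  rw [Un_apply_last hN, fLast_sub_one hN]
  simp [eVec, Pi.single_apply]
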